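/- arXiv:0809.1872 — 2 statements merged into one kernel-verified Lean document; each statement's English description precedes it below -/
import Mathlib

section
/- Let X be a regular ω₁-expandable Baire σ-space. Then dis(X) ≥ Δ(X). -/
open Set Cardinal TopologicalSpace

/-- A subset `s` of a topological space is discrete (as a subspace) iff every point of `s`
has an open neighbourhood in the ambient space meeting `s` only in that point. -/
def IsDiscreteSubset {X : Type*} [TopologicalSpace X] (s : Set X) : Prop :=
  ∀ x ∈ s, ∃ U : Set X, IsOpen U ∧ U ∩ s = {x}

/-- `dis X`: the least cardinality of a family of discrete subsets covering `X`. -/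
noncomputable def dis (X : Type*) [TopologicalSpace X] : Cardinal :=
  sInf {c : Cardinal | ∃ 𝒟 : Set (Set X), #𝒟 = c ∧ (∀ D ∈ 𝒟, IsDiscreteSubset D) ∧
    ⋃₀ 𝒟 = Set.univ}

/-- `Delta X`: the dispersion character, i.e. the least cardinality of a nonempty open set. -/
noncomputable def Delta (X : Type*) [TopologicalSpace X] : Cardinal :=
  sInf {c : Cardinal | ∃ U : Set X, IsOpen U ∧ U.Nonempty ∧ #U = c}

/-- A family `𝒩` of subsets is discrete if every point has an open neighbourhood meeting at
most one member of `𝒩`. -/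
def IsDiscreteFamily {X : Type*} [TopologicalSpace X] (𝒩 : Set (Set X)) : Prop :=
  ∀ x : X, ∃ U : Set X, IsOpen U ∧ x ∈ U ∧ {N | N ∈ 𝒩 ∧ (U ∩ N).Nonempty}.Subsingleton

/-- A network: for every open `U` and `x ∈ U` there is a member `N` with `x ∈ N ⊆ U`. -/
def IsNetwork {X : Type*} [TopologicalSpace X] (𝒩 : Set (Set X)) : Prop :=
  ∀ U : Set X, IsOpen U → ∀ x ∈ U, ∃ N ∈ 𝒩, x ∈ N ∧ N ⊆ U

/-- `X` has a σ-discrete network. -/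
def HasSigmaDiscreteNetwork (X : Type*) [TopologicalSpace X] : Prop :=
  ∃ 𝒩 : ℕ → Set (Set X), (∀ n, IsDiscreteFamily (𝒩 n)) ∧ IsNetwork (⋃ n, 𝒩 n)

/-- The star of a point `x` with respect to a collection `𝒢`: the union of all members of `𝒢`
containing `x`. -/
def st {X : Type*} [TopologicalSpace X] (x : X) (𝒢 : Set (Set X)) : Set X :=
  ⋃₀ {G ∈ 𝒢 | x ∈ G}

/-- A development for `X`: a sequence of open covers such that the stars at each point form a
neighbourhood base there. -/
def IsDevelopment {X : Type*} [TopologicalSpace X] (G : ℕ → Set (Set X)) : Prop :=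
  (∀ n, ∀ U ∈ G n, IsOpen U) ∧ (∀ n, ⋃₀ (G n) = Set.univ) ∧
  (∀ (x : X) (V : Set X), IsOpen V → x ∈ V → ∃ n, st x (G n) ⊆ V)

/-- `X` is `κ`-expandable: every closed discrete set `D` expands to a family of open sets
`{U d : d ∈ D}`, `d ∈ U d`, such that every point of `X` lies in at most `κ` of the `U d`. -/
def Expandable (X : Type*) [TopologicalSpace X] (κ : Cardinal) : Prop :=
  ∀ D : Set X, IsClosed D → IsDiscreteSubset D →
    ∃ U : X → Set X, (∀ d ∈ D, d ∈ U d ∧ IsOpen (U d)) ∧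
      ∀ y : X, #{d : D | y ∈ U (d : X)} ≤ κ

/- ### Auxiliary material -/

/-- The piece of `D` consisting of points that are "separated inside `D`" by a member of the
collection `𝒩`. -/
def netPiece {X : Type*} (𝒩 : Set (Set X)) (D : Set X) : Set X :=
  {x | x ∈ D ∧ ∃ N, N ∈ 𝒩 ∧ x ∈ N ∧ N ∩ D = {x}}

lemma netPiece_inter_subsingleton {X : Type*} {𝒩 : Set (Set X)} {W : Set X}
    (hW : {N | N ∈ 𝒩 ∧ (W ∩ N).Nonempty}.Subsingleton) (D : Set X) :
    (W ∩ netPiece 𝒩 D).Subsingleton := by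
  rintro x ⟨hxW, hxD, N, hN, hxN, hND⟩ x' ⟨hx'W, hx'D, N', hN', hx'N, hN'D⟩
  have hNN' : N = N' := hW ⟨hN, x, hxW, hxN⟩ ⟨hN', x', hx'W, hx'N⟩
  rw [hNN'] at hND
  have : x' ∈ ({x} : Set X) := hND ▸ (⟨hx'N, hx'D⟩ : x' ∈ N' ∩ D)
  exact (Set.mem_singleton_iff.mp this).symm

/-- Each piece is a closed set. -/
lemma netPiece_isClosed {X : Type*} [TopologicalSpace X] [T1Space X] {𝒩 : Set (Set X)}
    (hdf : IsDiscreteFamily 𝒩) (D : Set X) : IsClosed (netPiece 𝒩 D) := by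
  rw [← isOpen_compl_iff]
  rw [isOpen_iff_forall_mem_open]
  intro y hy
  obtain ⟨W, hWo, hyW, hWs⟩ := hdf y
  have hsub := netPiece_inter_subsingleton hWs D
  by_cases hne : (W ∩ netPiece 𝒩 D).Nonempty
  · obtain ⟨x, hx⟩ := hne
    refine ⟨W ∩ {x}ᶜ, ?_, hWo.inter isOpen_compl_singleton, hyW, ?_⟩
    · rintro z ⟨hzW, hzx⟩ hz
      exact hzx (hsub ⟨hzW, hz⟩ hx)
    · intro hyx
      exact hy (by simpa [Set.mem_singleton_iff.mp hyx] using hx.2)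
  · exact ⟨W, fun z hz hzP => hne ⟨z, hz, hzP⟩, hWo, hyW⟩

/-- Each piece is a discrete subset. -/
lemma netPiece_isDiscrete {X : Type*} [TopologicalSpace X] {𝒩 : Set (Set X)}
    (hdf : IsDiscreteFamily 𝒩) (D : Set X) : IsDiscreteSubset (netPiece 𝒩 D) := by
  intro x hx
  obtain ⟨W, hWo, hxW, hWs⟩ := hdf x
  have hsub := netPiece_inter_subsingleton hWs D
  refine ⟨W, hWo, ?_⟩
  apply Set.eq_singleton_iff_unique_mem.mpr
  exact ⟨⟨hxW, hx⟩, fun z hz => hsub hz ⟨hxW, hx⟩⟩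

/-- Generic counting lemma: if all fibers of `f` have cardinality at most `c`, then
`#α ≤ #β * c`. -/
lemma mk_le_mul_of_fibers {α β : Type u} (f : α → β) {c : Cardinal.{u}}
    (h : ∀ b : β, #{a : α // f a = b} ≤ c) : #α ≤ #β * c := by
  calc #α = #(Σ b : β, {a : α // f a = b}) := (Cardinal.mk_congr (Equiv.sigmaFiberEquiv f)).symm
    _ = Cardinal.sum (fun b : β => #{a : α // f a = b}) := Cardinal.mk_sigma _
    _ ≤ Cardinal.sum (fun _ : β => c) := Cardinal.sum_le_sum _ _ h
    _ = #β * c := Cardinal.sum_const' β c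

/-- Baire category contradiction: a nonempty Baire space is not a countable union of
nowhere dense sets. -/
lemma baire_contra {X : Type*} [TopologicalSpace X] [BaireSpace X] [Nonempty X]
    {ι : Type*} [Countable ι] (G : ι → Set X)
    (hnwd : ∀ i, interior (closure (G i)) = ∅)
    (hcov : (⋃ i, G i) = Set.univ) : False := by
  have hd : Dense (⋂ i, (closure (G i))ᶜ) :=
    dense_iInter_of_isOpen (fun i => isClosed_closure.isOpen_compl)
      (fun i => interior_eq_empty_iff_dense_compl.mp (hnwd i))
  obtain ⟨x, hx⟩ := hd.nonempty
  have hxu : x ∈ ⋃ i, G i := hcov ▸ Set.mem_univ x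
  obtain ⟨i, hxi⟩ := Set.mem_iUnion.mp hxu
  exact (Set.mem_iInter.mp hx i) (subset_closure hxi)

/-- If a set is closed and discrete and the space has no isolated points, it is nowhere
dense. -/
lemma nwd_of_closed_discrete {X : Type*} [TopologicalSpace X] {E : Set X}
    (hcl : IsClosed E) (hdisc : IsDiscreteSubset E)
    (hnoiso : ∀ x : X, ¬ IsOpen ({x} : Set X)) :
    interior (closure E) = ∅ := by
  rw [hcl.closure_eq]
  by_contra hne
  obtain ⟨x, hx⟩ := Set.nonempty_iff_ne_empty.mpr hne
  have hxE : x ∈ E := interior_subset hx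
  obtain ⟨U, hUo, hUE⟩ := hdisc x hxE
  have hxU : x ∈ U := by
    have : x ∈ ({x} : Set X) := rfl
    rw [← hUE] at this; exact this.1
  have hsing : U ∩ interior E = {x} := by
    apply Set.Subset.antisymm
    · intro z hz
      rw [← hUE]; exact ⟨hz.1, interior_subset hz.2⟩
    · rintro z rfl; exact ⟨hxU, hx⟩
  exact hnoiso x (hsing ▸ hUo.inter isOpen_interior)

/-- Closed discrete sets can be shrunk: `E \ {d}` is closed. -/
lemma closed_discrete_diff_singleton {X : Type*} [TopologicalSpace X] {E : Set X}
    (hcl : IsClosed E) (hdisc : IsDiscreteSubset E) (d : X) :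
    IsClosed (E \ {d}) := by
  rw [← isOpen_compl_iff, isOpen_iff_forall_mem_open]
  intro y hy
  by_cases hyE : y ∈ E
  · have hyd : y = d := by
      by_contra h
      exact hy ⟨hyE, h⟩
    obtain ⟨U, hUo, hUE⟩ := hdisc y hyE
    refine ⟨U, ?_, hUo, ?_⟩
    · intro z hz hzE
      have : z ∈ ({y} : Set X) := hUE ▸ (⟨hz, hzE.1⟩ : z ∈ U ∩ E)
      exact hzE.2 (by rw [Set.mem_singleton_iff.mp this, hyd]; rfl)
    · have : y ∈ ({y} : Set X) := rfl
      rw [← hUE] at this; exact this.1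
  · exact ⟨Eᶜ, fun z hz hzE => hz hzE.1, hcl.isOpen_compl, hyE⟩

/-- For a regular ω₁-expandable Baire σ-space, `dis X ≥ Delta X`. -/
theorem statement6 (X : Type*) [TopologicalSpace X] [T2Space X] [RegularSpace X] [BaireSpace X]
    (hnet : HasSigmaDiscreteNetwork X)
    (hexp : Expandable X (Cardinal.aleph 1)) :
    Delta X ≤ dis X := by
  classical
  rcases isEmpty_or_nonempty X with hX | hX
  · -- empty space : Delta X = 0
    have hempty : {c : Cardinal | ∃ U : Set X, IsOpen U ∧ U.Nonempty ∧ #U = c} = ∅ := by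
      ext c
      simp only [Set.mem_setOf_eq, Set.mem_empty_iff_false, iff_false]
      rintro ⟨U, -, ⟨x, -⟩, -⟩
      exact hX.elim x
    show sInf _ ≤ dis X
    rw [hempty, Cardinal.sInf_empty]
    exact Cardinal.zero_le _
  haveI : Nonempty X := hX
  obtain ⟨𝒩, hNdisc, hNnet⟩ := hnet
  -- the infimum in `dis` is attained
  have hdisSet : ({c : Cardinal | ∃ 𝒟 : Set (Set X), #𝒟 = c ∧ (∀ D ∈ 𝒟, IsDiscreteSubset D) ∧
      ⋃₀ 𝒟 = Set.univ}).Nonempty := by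
    refine ⟨_, Set.range (fun x : X => ({x} : Set X)), rfl, ?_, ?_⟩
    · rintro D ⟨x, rfl⟩ z hz
      simp only [Set.mem_singleton_iff] at hz
      subst hz
      exact ⟨Set.univ, isOpen_univ, by simp⟩
    · apply Set.eq_univ_iff_forall.mpr
      intro x
      exact ⟨{x}, ⟨x, rfl⟩, rfl⟩
  have hmem : dis X ∈ {c : Cardinal | ∃ 𝒟 : Set (Set X), #𝒟 = c ∧
      (∀ D ∈ 𝒟, IsDiscreteSubset D) ∧ ⋃₀ 𝒟 = Set.univ} := csInf_mem hdisSet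
  obtain ⟨𝒟, hmk, h𝒟disc, h𝒟cov⟩ := hmem
  by_contra hcon
  rw [not_le] at hcon
  -- every nonempty open set has more than `dis X` points
  have H : ∀ U : Set X, IsOpen U → U.Nonempty → dis X < #U := fun U hU hne =>
    hcon.trans_le (csInf_le' ⟨U, hU, hne, rfl⟩)
  -- no isolated points
  have hnoiso : ∀ x : X, ¬ IsOpen ({x} : Set X) := by
    intro x hx
    have h1 : dis X < #({x} : Set X) := H _ hx ⟨x, rfl⟩
    rw [Cardinal.mk_singleton] at h1
    have h2 : IsEmpty ↥𝒟 := Cardinal.mk_eq_zero_iff.mp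
      (hmk.trans (Cardinal.lt_one_iff_zero.mp h1))
    obtain ⟨D, hD, -⟩ := (Set.eq_univ_iff_forall.mp h𝒟cov x : x ∈ ⋃₀ 𝒟)
    exact h2.false ⟨D, hD⟩
  -- decomposition into closed discrete pieces covers everything
  have hPtcov : ∀ x : X, ∃ D ∈ 𝒟, ∃ n, x ∈ netPiece (𝒩 n) D := by
    intro x
    obtain ⟨D, hD, hxD⟩ := (Set.eq_univ_iff_forall.mp h𝒟cov x : x ∈ ⋃₀ 𝒟)
    obtain ⟨U, hUo, hUD⟩ := h𝒟disc D hD x hxD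
    have hxU : x ∈ U := by
      have : x ∈ ({x} : Set X) := rfl
      rw [← hUD] at this; exact this.1
    obtain ⟨N, hNmem, hxN, hNU⟩ := hNnet U hUo x hxU
    obtain ⟨n, hn⟩ := Set.mem_iUnion.mp hNmem
    have hND : N ∩ D = {x} := by
      apply Set.Subset.antisymm
      · intro z hz
        rw [← hUD]; exact ⟨hNU hz.1, hz.2⟩
      · rintro z rfl; exact ⟨hxN, hxD⟩
    exact ⟨D, hD, n, hxD, N, hn, hxN, hND⟩
  -- the key local counting bound
  have hkey : ∀ (n : ℕ) (y : X), ∃ W : Set X, IsOpen W ∧ y ∈ W ∧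
      #↥(W ∩ ⋃ D ∈ 𝒟, netPiece (𝒩 n) D) ≤ dis X := by
    intro n y
    obtain ⟨W, hWo, hyW, hWs⟩ := hNdisc n y
    have hsub := fun D => netPiece_inter_subsingleton hWs D
    refine ⟨W, hWo, hyW, ?_⟩
    have hchoice : ∀ z : ↥(W ∩ ⋃ D ∈ 𝒟, netPiece (𝒩 n) D),
        ∃ D : ↥𝒟, (z : X) ∈ netPiece (𝒩 n) (D : Set X) := by
      rintro ⟨z, hzW, hzU⟩
      obtain ⟨D, hD, hz⟩ := Set.mem_iUnion₂.mp hzU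
      exact ⟨⟨D, hD⟩, hz⟩
    choose g hg using hchoice
    have hginj : Function.Injective g := by
      intro z z' hzz
      apply Subtype.ext
      exact hsub (g z : Set X) ⟨z.2.1, hg z⟩ ⟨z'.2.1, by rw [hzz]; exact hg z'⟩
    calc #↥(W ∩ ⋃ D ∈ 𝒟, netPiece (𝒩 n) D) ≤ #↥𝒟 := Cardinal.mk_le_of_injective hginj
      _ = dis X := hmk
  rcases lt_or_ge (dis X) (Cardinal.aleph 1) with hsmall | hbig
  · -- countably many pieces : direct Baire contradiction
    have hcnt : 𝒟.Countable := (Cardinal.countable_iff_lt_aleph_one 𝒟).mpr (hmk ▸ hsmall)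
    haveI : Countable ↥𝒟 := hcnt.to_subtype
    refine baire_contra (X := X) (ι := ↥𝒟 × ℕ)
      (fun p => netPiece (𝒩 p.2) (p.1 : Set X)) ?_ ?_
    · rintro ⟨D, n⟩
      exact nwd_of_closed_discrete (netPiece_isClosed (hNdisc n) _)
        (netPiece_isDiscrete (hNdisc n) _) hnoiso
    · apply Set.eq_univ_iff_forall.mpr
      intro x
      obtain ⟨D, hD, n, hx⟩ := hPtcov x
      exact Set.mem_iUnion.mpr ⟨(⟨D, hD⟩, n), hx⟩
  · -- `dis X` is uncountable
    have hℵ0 : ℵ₀ ≤ dis X := (Cardinal.aleph0_le_aleph 1).trans hbig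
    -- 𝒟 is nonempty
    obtain ⟨x0⟩ := hX
    obtain ⟨D0, hD0, -⟩ := hPtcov x0
    haveI : Nonempty ↥𝒟 := ⟨⟨D0, hD0⟩⟩
    -- bound for every open set `W` that is "dense inside" some fixed level
    refine baire_contra (X := X) (ι := ℕ)
      (fun n => ⋃ D ∈ 𝒟, netPiece (𝒩 n) D) ?_ ?_
    swap
    · apply Set.eq_univ_iff_forall.mpr
      intro x
      obtain ⟨D, hD, n, hx⟩ := hPtcov x
      exact Set.mem_iUnion.mpr ⟨n, Set.mem_iUnion₂.mpr ⟨D, hD, hx⟩⟩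
    intro n
    by_contra hne
    obtain ⟨y, hy⟩ := Set.nonempty_iff_ne_empty.mpr hne
    set F : Set X := ⋃ D ∈ 𝒟, netPiece (𝒩 n) D with hF
    obtain ⟨W₀, hW0o, hyW0, hW0card⟩ := hkey n y
    set V : Set X := interior (closure F) with hV
    set W : Set X := W₀ ∩ V with hWdef
    have hWo : IsOpen W := hW0o.inter isOpen_interior
    have hyW : y ∈ W := ⟨hyW0, hy⟩
    set S : Set X := W ∩ F with hS
    have hScard : #↥S ≤ dis X :=
      le_trans (Cardinal.mk_le_mk_of_subset
        (Set.inter_subset_inter_left F Set.inter_subset_left)) hW0card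
    have hSdense : ∀ O : Set X, IsOpen O → O ⊆ W → O.Nonempty → (O ∩ S).Nonempty := by
      intro O hOo hOW ⟨z, hz⟩
      have hzcl : z ∈ closure F := interior_subset (hOW hz).2
      obtain ⟨w, hwO, hwF⟩ := mem_closure_iff.mp hzcl O hOo hz
      exact ⟨w, hwO, hOW hwO, hwF⟩
    -- each closed discrete piece meets `W` in at most `dis X` points
    have hEb : ∀ (D : Set X) (m : ℕ), #↥(W ∩ netPiece (𝒩 m) D) ≤ dis X := by
      intro D m
      set E : Set X := netPiece (𝒩 m) D with hE
      have hEcl : IsClosed E := netPiece_isClosed (hNdisc m) D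
      have hEdisc : IsDiscreteSubset E := netPiece_isDiscrete (hNdisc m) D
      obtain ⟨Ue, hUe1, hUe2⟩ := hexp E hEcl hEdisc
      have hf : ∀ z : ↥(W ∩ E), ∃ s : ↥S, (s : X) ∈ Ue (z : X) := by
        rintro ⟨z, hzW, hzE⟩
        have hU'o : IsOpen (Ue z \ (E \ {z})) :=
          (hUe1 z hzE).2.sdiff (closed_discrete_diff_singleton hEcl hEdisc z)
        have hO : IsOpen ((Ue z \ (E \ {z})) ∩ W) := hU'o.inter hWo
        have hzO : z ∈ (Ue z \ (E \ {z})) ∩ W :=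
          ⟨⟨(hUe1 z hzE).1, fun h => h.2 rfl⟩, hzW⟩
        obtain ⟨s, hsO, hsS⟩ := hSdense _ hO Set.inter_subset_right ⟨z, hzO⟩
        exact ⟨⟨s, hsS⟩, hsO.1.1⟩
      choose f hfs using hf
      have hfib : ∀ s : ↥S, #{z : ↥(W ∩ E) // f z = s} ≤ Cardinal.aleph 1 := by
        intro s
        refine le_trans (Cardinal.mk_le_of_injective (f := fun z : {z : ↥(W ∩ E) // f z = s} =>
          (⟨⟨(z : ↥(W ∩ E)), (z : ↥(W ∩ E)).2.2⟩, by
            have := hfs (z : ↥(W ∩ E)); rw [z.2] at this; exact this⟩ :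
            {d : E | (s : X) ∈ Ue (d : X)})) ?_) (hUe2 s)
        intro z z' hzz
        apply Subtype.ext; apply Subtype.ext
        exact congrArg (fun w : {d : E | (s : X) ∈ Ue (d : X)} => ((w : ↥E) : X)) hzz
      calc #↥(W ∩ E) ≤ #↥S * Cardinal.aleph 1 := mk_le_mul_of_fibers f hfib
        _ ≤ dis X * Cardinal.aleph 1 := mul_le_mul_left hScard _
        _ = dis X := by
            rw [Cardinal.mul_eq_max hℵ0 (Cardinal.aleph0_le_aleph 1)]
            exact max_eq_left hbig
    -- now count all of `W`
    have hWsub : W ⊆ ⋃ p : ↥𝒟 × ℕ, (W ∩ netPiece (𝒩 p.2) (p.1 : Set X)) := by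
      intro x hx
      obtain ⟨D, hD, m, hxm⟩ := hPtcov x
      exact Set.mem_iUnion.mpr ⟨(⟨D, hD⟩, m), hx, hxm⟩
    have hWbound : #↥W ≤ dis X := by
      have h1 : #↥W ≤ #↥(⋃ p : ↥𝒟 × ℕ, (W ∩ netPiece (𝒩 p.2) (p.1 : Set X))) :=
        Cardinal.mk_le_mk_of_subset hWsub
      have h2 : #↥(⋃ p : ↥𝒟 × ℕ, (W ∩ netPiece (𝒩 p.2) (p.1 : Set X))) ≤
          #(↥𝒟 × ℕ) * ⨆ p : ↥𝒟 × ℕ, #↥(W ∩ netPiece (𝒩 p.2) (p.1 : Set X)) :=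
        Cardinal.mk_iUnion_le _
      have h3 : (⨆ p : ↥𝒟 × ℕ, #↥(W ∩ netPiece (𝒩 p.2) (p.1 : Set X))) ≤ dis X :=
        ciSup_le' (fun p => hEb p.1 p.2)
      have h4 : #(↥𝒟 × ℕ) ≤ dis X := by
        rw [Cardinal.mk_prod, Cardinal.lift_uzero, Cardinal.mk_nat, Cardinal.lift_aleph0, hmk,
          Cardinal.mul_eq_max hℵ0 le_rfl]
        exact max_le le_rfl hℵ0
      calc #↥W ≤ #(↥𝒟 × ℕ) * ⨆ p : ↥𝒟 × ℕ, #↥(W ∩ netPiece (𝒩 p.2) (p.1 : Set X)) :=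
            h1.trans h2
        _ ≤ dis X * dis X := mul_le_mul' h4 h3
        _ = dis X := Cardinal.mul_eq_self hℵ0
    exact absurd (H W hWo ⟨y, hyW⟩) (not_lt.mpr hWbound)
end

section
/- Let C be a Polish space with a countable base B = {B_n : n ∈ ω} such that each B_n is homeomorphic to C. If C contains a Q-set of cardinality ℵ₂, then C contains a dense Q-set Z with Δ(Z) = ℵ₂ (every non-empty relatively open subset of Z has cardinality ℵ₂). -/
open Set Cardinal TopologicalSpace

/-- A Q-set: an uncountable set every subset of which is a relative F_σ. -/
def IsQSet {C : Type*} [TopologicalSpace C] (Y : Set C) : Prop :=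
  Cardinal.aleph0 < #Y ∧
  ∀ S : Set Y, ∃ F : ℕ → Set Y, (∀ n, IsClosed (F n)) ∧ S = ⋃ n, F n

/-!
Send the Q-set `Y` to the Cantor space by `x ↦ (x ∈ B n)ₙ`, an injection with continuous inverse,
and from there onto a nowhere dense Cantor set in `C`: this gives a nowhere dense Q-set `A` of
size `ℵ₂`. Recursively, inside each `B n` choose a basic open `V n` missing the closures of the
earlier copies and put in it a homeomorphic copy `T n` of `A`. For `Z = ⋃ n, T n` this gives
`T n = Z ∩ closure (T n) ∩ V n`, a relative Fσ, and a space covered by countably many relatively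
Fσ Q-subspaces is a Q-space. Every nonempty open set of `C` contains some `T n`, so `Z` is dense
and all its nonempty open subsets have size `ℵ₂`.
-/

open Topology Filter Function

/-- Every subset is Gδ; equivalently (by complements) every subset is Fσ, as in `IsQSet`. -/
def IsQSpace (X : Type*) [TopologicalSpace X] : Prop := ∀ s : Set X, IsGδ s

section QSpace

variable {X Y : Type*} [TopologicalSpace X] [TopologicalSpace Y]

theorem isQSpace_iff_forall_eq_iUnion_isClosed :
    IsQSpace X ↔ ∀ S : Set X, ∃ F : ℕ → Set X, (∀ n, IsClosed (F n)) ∧ S = ⋃ n, F n := by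
  have hcompl : ∀ S : Set X,
      IsGδ Sᶜ ↔ ∃ F : ℕ → Set X, (∀ n, IsClosed (F n)) ∧ S = ⋃ n, F n := by
    intro S
    rw [isGδ_iff_eq_iInter_nat]
    constructor
    · rintro ⟨f, hf, h⟩
      refine ⟨fun n => (f n)ᶜ, fun n => (hf n).isClosed_compl, ?_⟩
      rw [← compl_iInter, ← h, compl_compl]
    · rintro ⟨F, hF, rfl⟩
      exact ⟨fun n => (F n)ᶜ, fun n => (hF n).isOpen_compl, compl_iUnion F⟩
  exact ⟨fun h S => (hcompl S).1 (h Sᶜ), fun h S => by simpa using (hcompl Sᶜ).2 (h Sᶜ)⟩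

theorem isQSet_iff {Y : Set X} : IsQSet Y ↔ ℵ₀ < #Y ∧ IsQSpace Y :=
  and_congr_right' isQSpace_iff_forall_eq_iUnion_isClosed.symm

theorem IsQSpace.of_continuous_injective {f : X → Y} (hf : Continuous f) (hinj : Injective f)
    (hY : IsQSpace Y) : IsQSpace X := fun s => by
  simpa only [hinj.preimage_image] using (hY (f '' s)).preimage hf

theorem Topology.IsEmbedding.isQSpace_image {f : X → Y} (hf : IsEmbedding f) {s : Set X}
    (hs : IsQSpace s) : IsQSpace (f '' s) := by
  let e := Equiv.Set.image f s hf.injective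
  refine hs.of_continuous_injective (f := e.symm) ?_ e.symm.injective
  rw [continuous_induced_rng, hf.continuous_iff]
  convert continuous_subtype_val using 1
  funext x
  exact congrArg Subtype.val (e.apply_symm_apply x)

theorem IsGδ.exists_eq_preimage_val {s : Set X} {t : Set s} (ht : IsGδ t) :
    ∃ u : Set X, IsGδ u ∧ Subtype.val ⁻¹' u = t := by
  obtain ⟨f, hf, rfl⟩ := ht.eq_iInter_nat
  choose g hg hgf using fun n => isOpen_induced_iff.mp (hf n)
  exact ⟨⋂ n, g n, .iInter_of_isOpen hg, by simp only [preimage_iInter, hgf]⟩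

theorem IsQSpace.of_iUnion_eq_univ {T : ℕ → Set X} (hcover : ⋃ n, T n = Set.univ)
    (hT : ∀ n, IsQSpace (T n)) (hcompl : ∀ n, IsGδ (T n)ᶜ) : IsQSpace X := by
  -- `s = ⋂ n, (s ∪ (T n)ᶜ)`, and inside `T n` the set `s` is the trace of a Gδ set.
  intro s
  have hlocal : ∀ n, IsGδ (s ∪ (T n)ᶜ) := by
    intro n
    obtain ⟨u, hu, hus⟩ := (hT n (Subtype.val ⁻¹' s)).exists_eq_preimage_val
    convert hu.union (hcompl n) using 1
    ext x
    by_cases hx : x ∈ T n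
    · simpa [hx] using (Set.ext_iff.mp hus ⟨x, hx⟩).symm
    · simp [hx]
  convert IsGδ.iInter hlocal
  ext x
  obtain ⟨n, hn⟩ := mem_iUnion.mp (eq_univ_iff_forall.mp hcover x)
  simp only [mem_iInter, mem_union, mem_compl_iff]
  exact ⟨fun hx _ => .inl hx, fun h => (h n).resolve_right (not_not.mpr hn)⟩

end QSpace

theorem IsNowhereDense.union {X : Type*} [TopologicalSpace X] {s t : Set X}
    (hs : IsNowhereDense s) (ht : IsNowhereDense t) : IsNowhereDense (s ∪ t) := by
  rw [IsNowhereDense, closure_union, interior_union_isClosed_of_interior_empty isClosed_closure ht]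
  exact hs

instance {ι : Type*} [Infinite ι] {Y : Type*} [TopologicalSpace Y] [Nontrivial Y] :
    PerfectSpace (ι → Y) := by
  refine perfectSpace_iff_forall_not_isolated.mpr fun x => ?_
  classical
  rw [← mem_closure_iff_nhdsWithin_neBot]
  choose y hy using fun i => exists_ne (x i)
  refine mem_closure_of_tendsto (f := fun i => update x i (y i)) (b := cofinite)
    (tendsto_pi_nhds.mpr fun j => tendsto_const_nhds.congr' ?_) (.of_forall fun i => ?_)
  · filter_upwards [eventually_cofinite_ne j] with i hi
    exact (update_of_ne hi.symm _ _).symm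
  · simpa [funext_iff] using ⟨i, by simpa using hy i⟩

section BasisCode

variable {C : Type*} [TopologicalSpace C]

open Classical in
noncomputable def basisCode (B : ℕ → Set C) (x : C) : ℕ → Bool := fun n => decide (x ∈ B n)

theorem basisCode_injective [T0Space C] {B : ℕ → Set C} (hB : IsTopologicalBasis (range B)) :
    Injective (basisCode B) := fun x y hxy =>
  (hB.inseparable_iff.mpr <| forall_mem_range.mpr fun n => by
    simpa [basisCode] using congrFun hxy n).eq

theorem IsQSpace.image_basisCode [T0Space C] {B : ℕ → Set C} (hB : IsTopologicalBasis (range B))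
    {Y : Set C} (hY : IsQSpace Y) : IsQSpace (basisCode B '' Y) := by
  let e := Equiv.Set.image (basisCode B) Y (basisCode_injective hB)
  refine hY.of_continuous_injective (f := e.symm) ?_ e.symm.injective
  rw [continuous_induced_rng, hB.continuous_iff, forall_mem_range]
  -- the inverse of the code on `Y` is continuous: it pulls `B n` back to a cylinder
  intro n
  have hcode : ∀ w, basisCode B (e.symm w) = w := fun w =>
    congrArg Subtype.val (e.apply_symm_apply w)
  have hcoord : Continuous fun w : ↥(basisCode B '' Y) => w.1 n :=
    (continuous_apply n).comp continuous_subtype_val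
  have hcyl : IsOpen {w : ↥(basisCode B '' Y) | w.1 n = true} :=
    hcoord.isOpen_preimage {true} (isOpen_discrete _)
  convert hcyl using 1
  ext w
  simp [← hcode w, basisCode]

end BasisCode

/-- A vertical slice of `(ℕ → Bool) × (ℕ → Bool)` is nowhere dense, because the Cantor space is
perfect; transport it into `C` through `(ℕ → Bool) × (ℕ → Bool) ≃ₜ ℕ → Bool`. -/
theorem exists_isEmbedding_cantor_isNowhereDense_range {C : Type*} [TopologicalSpace C]
    [PolishSpace C] (hC : ¬ (Set.univ : Set C).Countable) :
    ∃ g : (ℕ → Bool) → C, IsEmbedding g ∧ IsNowhereDense (range g) := by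
  obtain ⟨f, -, hfc, hfi⟩ := isClosed_univ.exists_nat_bool_injection_of_not_countable hC
  let Φ : (ℕ → Bool) × (ℕ → Bool) ≃ₜ (ℕ → Bool) :=
    Homeomorph.sumArrowHomeomorphProdArrow.symm.trans
      (Homeomorph.piCongrLeft (Y := fun _ => Bool) Equiv.natSumNatEquivNat)
  have hF : IsClosedEmbedding (f ∘ Φ) :=
    (hfc.comp Φ.continuous).isClosedEmbedding (hfi.comp Φ.injective)
  refine ⟨fun z => f (Φ (default, z)), ?_, ?_⟩
  · exact ((hF.continuous.comp (by fun_prop)).isClosedEmbedding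
      (hF.injective.comp (Prod.mk_right_injective default))).isEmbedding
  · have hslice : IsNowhereDense ({default} ×ˢ Set.univ : Set ((ℕ → Bool) × (ℕ → Bool))) := by
      rw [(isClosed_singleton.prod isClosed_univ).isNowhereDense_iff, interior_prod_eq,
        interior_singleton, empty_prod]
    convert hF.isInducing.isNowhereDense_image hslice using 1
    ext x
    simp [eq_comm]

section Construction

variable {C : Type*} [TopologicalSpace C] {B : ℕ → Set C}

theorem exists_isNowhereDense_qSpace_of_qSpace [PolishSpace C]
    (hB : IsTopologicalBasis (range B)) {Y : Set C} (hY : IsQSpace Y) (hYc : ¬ Y.Countable) :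
    ∃ A : Set C, IsQSpace A ∧ #A = #Y ∧ IsNowhereDense A := by
  obtain ⟨g, hg, hgnd⟩ :=
    exists_isEmbedding_cantor_isNowhereDense_range (C := C) fun h => hYc (h.mono (subset_univ Y))
  refine ⟨g '' (basisCode B '' Y), hg.isQSpace_image (hY.image_basisCode hB), ?_,
    hgnd.mono (image_subset_range _ _)⟩
  rw [image_image]
  exact mk_image_eq (hg.injective.comp (basisCode_injective hB))

theorem exists_qSpace_copy_in_basis_set [Nonempty C] (hB : IsTopologicalBasis (range B))
    (hhomeo : ∀ n, Nonempty (B n ≃ₜ C)) {A : Set C} (hA : IsQSpace A) (hAnd : IsNowhereDense A)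
    (n : ℕ) {P : Set C} (hP : IsNowhereDense P) :
    ∃ V T : Set C, IsOpen V ∧ Disjoint V P ∧ T ⊆ V ∧ IsNowhereDense T ∧
      (V ⊆ B n ∧ IsQSpace T ∧ #T = #A) := by
  obtain ⟨φ⟩ := hhomeo n
  have hBopen : IsOpen (B n) := hB.isOpen ⟨n, rfl⟩
  obtain ⟨x, hx⟩ : (B n \ closure P).Nonempty :=
    (interior_eq_empty_iff_dense_compl.mp hP).inter_open_nonempty _ hBopen
      ⟨_, (φ.symm (Classical.arbitrary C)).2⟩
  obtain ⟨_, ⟨k, rfl⟩, -, hk⟩ :=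
    hB.exists_subset_of_mem_open hx (hBopen.sdiff isClosed_closure)
  obtain ⟨ψ⟩ := hhomeo k
  have hj : IsOpenEmbedding (Subtype.val ∘ ψ.symm) :=
    (hB.isOpen ⟨k, rfl⟩).isOpenEmbedding_subtypeVal.comp ψ.symm.isOpenEmbedding
  refine ⟨B k, _ '' A, hB.isOpen ⟨k, rfl⟩, ?_, ?_, hj.isInducing.isNowhereDense_image hAnd,
    hk.trans sdiff_subset, hj.isEmbedding.isQSpace_image hA, mk_image_eq hj.injective⟩
  · exact disjoint_left.mpr fun y hy hyP => (hk hy).2 (subset_closure hyP)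
  · rintro _ ⟨a, -, rfl⟩
    exact (ψ.symm a).2

end Construction

section Separated

variable {X : Type*}

def iterateUnion (T : ℕ → Set X → Set X) : ℕ → Set X
  | 0 => ∅
  | n + 1 => iterateUnion T n ∪ T n (iterateUnion T n)

theorem monotone_iterateUnion (T : ℕ → Set X → Set X) : Monotone (iterateUnion T) :=
  monotone_nat_of_le_succ fun _ => subset_union_left

theorem subset_iterateUnion (T : ℕ → Set X → Set X) {m n : ℕ} (h : m < n) :
    T m (iterateUnion T m) ⊆ iterateUnion T n :=
  subset_union_right.trans (monotone_iterateUnion T h)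

variable [TopologicalSpace X]

theorem exists_separated_seq_of_step (p : ℕ → Set X → Set X → Prop)
    (step : ∀ n P, IsNowhereDense P →
      ∃ V T, IsOpen V ∧ Disjoint V P ∧ T ⊆ V ∧ IsNowhereDense T ∧ p n V T) :
    ∃ V T : ℕ → Set X, (∀ n, IsOpen (V n) ∧ T n ⊆ V n ∧ p n (V n) (T n)) ∧
      ∀ m n, m < n → Disjoint (closure (T m)) (V n) := by
  choose! V T hopen hdisj hsub hnd hp using step
  have hacc : ∀ n, IsNowhereDense (iterateUnion T n) := by
    intro n
    induction n with
    | zero => exact isNowhereDense_empty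
    | succ n ih => exact ih.union (hnd n _ ih)
  refine ⟨fun n => V n (iterateUnion T n), fun n => T n (iterateUnion T n),
    fun n => ⟨hopen n _ (hacc n), hsub n _ (hacc n), hp n _ (hacc n)⟩, fun m n hmn => ?_⟩
  exact (((hdisj n _ (hacc n)).mono_right (subset_iterateUnion T hmn)).closure_right
    (hopen n _ (hacc n))).symm

theorem mem_iff_mem_closure_inter_of_separated {V T : ℕ → Set X} (hTV : ∀ n, T n ⊆ V n)
    (hsep : ∀ m n, m < n → Disjoint (closure (T m)) (V n)) {x : X} (hx : x ∈ ⋃ m, T m) (n : ℕ) :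
    x ∈ T n ↔ x ∈ closure (T n) ∩ V n := by
  refine ⟨fun h => ⟨subset_closure h, hTV n h⟩, fun ⟨hcl, hV⟩ => ?_⟩
  obtain ⟨m, hm⟩ := mem_iUnion.mp hx
  rcases lt_trichotomy m n with hmn | rfl | hnm
  · exact absurd hV (disjoint_left.mp (hsep m n hmn) (subset_closure hm))
  · exact hm
  · exact absurd (hTV m hm) (disjoint_left.mp (hsep n m hnm) hcl)

theorem isQSpace_iUnion_of_separated [PerfectlyNormalSpace X] {V T : ℕ → Set X}
    (hV : ∀ n, IsOpen (V n)) (hTV : ∀ n, T n ⊆ V n)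
    (hsep : ∀ m n, m < n → Disjoint (closure (T m)) (V n)) (hT : ∀ n, IsQSpace (T n)) :
    IsQSpace (⋃ n, T n) := by
  refine IsQSpace.of_iUnion_eq_univ (T := fun n => Subtype.val ⁻¹' T n) ?_ (fun n => ?_)
    (fun n => ?_)
  · exact eq_univ_of_forall fun z => mem_iUnion.mpr (mem_iUnion.mp z.2 :)
  · exact (hT n).of_continuous_injective (f := fun z => ⟨z.1.1, z.2⟩) (by fun_prop)
      fun z w h => Subtype.ext (Subtype.ext (congrArg (fun t : T n => t.1) h))
  · have hrel : Subtype.val ⁻¹' T n = Subtype.val ⁻¹' (closure (T n) ∩ V n) :=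
      ext fun z => mem_iff_mem_closure_inter_of_separated hTV hsep z.2 n
    rw [hrel, ← preimage_compl, compl_inter]
    exact (isClosed_closure.isOpen_compl.isGδ.union (hV n).isClosed_compl.isGδ).preimage
      continuous_subtype_val

end Separated

theorem mk_iUnion_nat_eq {X : Type*} {T : ℕ → Set X} {κ : Cardinal} (hκ : ℵ₀ ≤ κ)
    (hT : ∀ n, #(T n) = κ) : #(⋃ n, T n) = κ := by
  refine le_antisymm ?_ ((hT 0).symm.trans_le (mk_le_mk_of_subset (subset_iUnion T 0)))
  simpa [hT, aleph0_mul_eq hκ] using mk_iUnion_le_lift T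

theorem Delta_eq_of_forall_isOpen {X : Type*} [TopologicalSpace X] [Nonempty X] {κ : Cardinal}
    (hX : #X ≤ κ) (hU : ∀ U : Set X, IsOpen U → U.Nonempty → κ ≤ #U) : Delta X = κ := by
  have hmem : #X ∈ {c | ∃ U : Set X, IsOpen U ∧ U.Nonempty ∧ #U = c} :=
    ⟨univ, isOpen_univ, univ_nonempty, mk_univ⟩
  refine le_antisymm ((csInf_le' hmem).trans hX) (le_csInf ⟨_, hmem⟩ ?_)
  rintro _ ⟨U, hUo, hUne, rfl⟩
  exact hU U hUo hUne

section BasisSubsets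

variable {C : Type*} [TopologicalSpace C] {B : ℕ → Set C} {T : ℕ → Set C}

theorem exists_subset_of_isOpen_of_subset_basis (hB : IsTopologicalBasis (range B))
    (hT : ∀ n, T n ⊆ B n) {U : Set C} (hU : IsOpen U) (hne : U.Nonempty) : ∃ n, T n ⊆ U := by
  obtain ⟨x, hx⟩ := hne
  obtain ⟨_, ⟨n, rfl⟩, -, hn⟩ := hB.exists_subset_of_mem_open hx hU
  exact ⟨n, (hT n).trans hn⟩

theorem dense_iUnion_of_subset_basis (hB : IsTopologicalBasis (range B)) (hT : ∀ n, T n ⊆ B n)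
    (hne : ∀ n, (T n).Nonempty) : Dense (⋃ n, T n) := by
  refine dense_iff_inter_open.mpr fun U hU hUne => ?_
  obtain ⟨n, hn⟩ := exists_subset_of_isOpen_of_subset_basis hB hT hU hUne
  exact (hne n).mono (subset_inter hn (subset_iUnion T n))

theorem Delta_iUnion_of_subset_basis (hB : IsTopologicalBasis (range B)) (hT : ∀ n, T n ⊆ B n)
    {κ : Cardinal} (hκ : ℵ₀ ≤ κ) (hcard : ∀ n, #(T n) = κ) : Delta (⋃ n, T n) = κ := by
  have hZ : #(⋃ n, T n) = κ := mk_iUnion_nat_eq hκ hcard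
  have : Nonempty (⋃ n, T n) := mk_ne_zero_iff.mp (hZ ▸ (aleph0_pos.trans_le hκ).ne')
  refine Delta_eq_of_forall_isOpen hZ.le fun U hU ⟨z, hz⟩ => ?_
  obtain ⟨U', hU', rfl⟩ := isOpen_induced_iff.mp hU
  obtain ⟨n, hn⟩ := exists_subset_of_isOpen_of_subset_basis hB hT hU' ⟨z, hz⟩
  rw [← hcard n]
  exact mk_le_of_injective (f := fun t : T n =>
      (⟨⟨t, mem_iUnion_of_mem n t.2⟩, hn t.2⟩ : (Subtype.val ⁻¹' U' : Set (⋃ n, T n))))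
    fun s t h => Subtype.ext (congrArg (fun u : (Subtype.val ⁻¹' U' : Set (⋃ n, T n)) => u.1.1) h)

end BasisSubsets

/-- If a Polish space with a countable base of copies of itself contains a Q-set of size ℵ₂,
then it contains a dense Q-set of dispersion character ℵ₂. -/
theorem statement9 (C : Type*) [TopologicalSpace C] [PolishSpace C]
    (B : ℕ → Set C) (hbasis : TopologicalSpace.IsTopologicalBasis (Set.range B))
    (hhomeo : ∀ n, Nonempty (↥(B n) ≃ₜ C))
    (hQ : ∃ Y : Set C, IsQSet Y ∧ #Y = Cardinal.aleph 2) :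
    ∃ Z : Set C, IsQSet Z ∧ Dense Z ∧ Delta ↥Z = Cardinal.aleph 2 := by
  obtain ⟨Y, hYQ, hYcard⟩ := hQ
  obtain ⟨hYunc, hY⟩ := isQSet_iff.mp hYQ
  have hYc : ¬ Y.Countable := fun h => hYunc.not_ge (le_aleph0_iff_set_countable.mpr h)
  obtain ⟨A, hA, hAcard, hAnd⟩ := exists_isNowhereDense_qSpace_of_qSpace hbasis hY hYc
  have : Nonempty C := ⟨(mk_ne_zero_iff.mp (aleph0_pos.trans hYunc).ne').some.1⟩
  obtain ⟨V, T, hVT, hsep⟩ := exists_separated_seq_of_step _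
    fun n P hP => exists_qSpace_copy_in_basis_set hbasis hhomeo hA hAnd n hP
  simp only [forall_and] at hVT
  obtain ⟨hV, hTV, hVB, hTQ, hTcard⟩ := hVT
  have hTB : ∀ n, T n ⊆ B n := fun n => (hTV n).trans (hVB n)
  have hℵ : ℵ₀ < Cardinal.aleph 2 := aleph0_lt_aleph.mpr (by norm_num)
  rw [hAcard, hYcard] at hTcard
  refine ⟨⋃ n, T n, isQSet_iff.mpr ⟨?_, isQSpace_iUnion_of_separated hV hTV hsep hTQ⟩,
    dense_iUnion_of_subset_basis hbasis hTB fun n =>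
      nonempty_coe_sort.mp (mk_ne_zero_iff.mp ((hTcard n).trans_ne (aleph_pos 2).ne')),
    Delta_iUnion_of_subset_basis hbasis hTB hℵ.le hTcard⟩
  rwa [mk_iUnion_nat_eq hℵ.le hTcard]
end
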